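/- Let n ∈ ℝ³ be a unit vector, U_x = exp(−i(x/2)(n·σ)), d₀ ∈ ℝ and d ∈ ℝ³. Then the group average satisfies (1/2π) ∫₀^{2π} U_x (d₀·I + d·σ) U_x† dx = d₀·I + (d·n)(n·σ). Consequently, this average equals the identity matrix I if and only if d₀ = 1 and d·n = 0; this characterizes which operators P₀ = d₀·I + d·σ generate a covariant POVM for qubit phase estimation. -/

import Mathlib

/-! Because `(n·σ)² = 1`, the exponential is `U_x = cos (x/2) - i sin (x/2) (n·σ)`, so `U_x P U_x†`
is `(P + (n·σ) P (n·σ))/2` plus `cos x` and `sin x` times constant matrices, and the average over a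
period keeps only the constant term. The anticommutator `{n·σ, d·σ} = 2 (d·n)` reduces that term
to `d₀ + (d·n)(n·σ)`. As `n·σ` is traceless and nonzero, this is `I` exactly when `d₀ = 1` and
`d·n = 0`. -/

open Matrix Complex

noncomputable section

/-- The Pauli matrices. -/
def σ1 : Matrix (Fin 2) (Fin 2) ℂ := !![0, 1; 1, 0]
def σ2 : Matrix (Fin 2) (Fin 2) ℂ := !![0, -Complex.I; Complex.I, 0]
def σ3 : Matrix (Fin 2) (Fin 2) ℂ := !![1, 0; 0, -1]

/-- For `v ∈ ℝ³`, the matrix `v·σ = v₁σ₁ + v₂σ₂ + v₃σ₃`. -/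
def pauliDot (v : Fin 3 → ℝ) : Matrix (Fin 2) (Fin 2) ℂ :=
  (v 0 : ℂ) • σ1 + (v 1 : ℂ) • σ2 + (v 2 : ℂ) • σ3

/-- The Euclidean norm on `ℝ³`. -/
def norm3 (v : Fin 3 → ℝ) : ℝ := Real.sqrt (v ⬝ᵥ v)

/-- The rotation unitary `U_x = exp(−i(x/2)(n·σ))`. -/
def Ux (n : Fin 3 → ℝ) (x : ℝ) : Matrix (Fin 2) (Fin 2) ℂ :=
  NormedSpace.exp ((-(Complex.I * (x / 2 : ℝ))) • pauliDot n)

/-- The (entrywise) group average `(1/2π) ∫₀^{2π} U_x P₀ U_x† dx` of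
`P₀ = d₀·I + d·σ`. -/
def groupAverage (n : Fin 3 → ℝ) (d0 : ℝ) (d : Fin 3 → ℝ) (i j : Fin 2) : ℂ :=
  (1 / (2 * Real.pi) : ℂ) *
    ∫ x in (0 : ℝ)..(2 * Real.pi),
      (Ux n x * ((d0 : ℂ) • 1 + pauliDot d) * (Ux n x)ᴴ) i j

section ComplexAlgebra

variable {A : Type*} [Ring A] [Algebra ℂ A]

theorem NormedSpace.exp_smul_of_mul_self_eq_one [TopologicalSpace A] [IsTopologicalRing A]
    [ContinuousSMul ℂ A] [T2Space A] {a : A} (ha : a * a = 1) (z : ℂ) :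
    NormedSpace.exp (z • a) = Complex.cosh z • (1 : A) + Complex.sinh z • a := by
  have hpow (k : ℕ) : a ^ (2 * k) = 1 := by rw [pow_mul, sq, ha, one_pow]
  rw [NormedSpace.exp_eq_tsum ℂ]
  refine HasSum.tsum_eq (HasSum.even_add_odd ?_ ?_)
  · convert (Complex.hasSum_cosh z).smul_const (1 : A) using 2 with k
    rw [smul_pow, hpow, smul_smul, div_eq_inv_mul]
  · convert (Complex.hasSum_sinh z).smul_const a using 2 with k
    rw [smul_pow, pow_succ a, hpow, one_mul, smul_smul, div_eq_inv_mul]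

theorem conj_rotation_eq (N P : A) (θ : ℝ) :
    ((Real.cos θ : ℂ) • (1 : A) - ((Real.sin θ : ℂ) * I) • N) * P
        * ((Real.cos θ : ℂ) • (1 : A) + ((Real.sin θ : ℂ) * I) • N)
      = (1 / 2 : ℂ) • (P + N * P * N) + (Real.cos (2 * θ) : ℂ) • ((1 / 2 : ℂ) • (P - N * P * N))
        + (Real.sin (2 * θ) : ℂ) • ((I / 2) • (P * N - N * P)) := by
  have hcos : (Real.cos (2 * θ) : ℂ) = 2 * (Real.cos θ : ℂ) ^ 2 - 1 := by
    exact_mod_cast Real.cos_two_mul θ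
  have hsin : (Real.sin (2 * θ) : ℂ) = 2 * (Real.sin θ : ℂ) * (Real.cos θ : ℂ) := by
    exact_mod_cast Real.sin_two_mul θ
  have hpyth : (Real.sin θ : ℂ) ^ 2 = 1 - (Real.cos θ : ℂ) ^ 2 := by
    rw [eq_sub_iff_add_eq]; exact_mod_cast Real.sin_sq_add_cos_sq θ
  rw [hcos, hsin]
  simp only [sub_mul, mul_add, smul_mul_assoc, mul_smul_comm, one_mul, mul_one,
    smul_smul, smul_sub, smul_add]
  linear_combination (norm := module) (hpyth - (Real.sin θ : ℂ) ^ 2 * I_sq) • (N * P * N)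

theorem half_smul_add_mul_mul_eq_of_anticomm {N D : A} (hN : N * N = 1) {t : ℂ}
    (hND : N * D + D * N = (2 * t) • 1) (c : ℂ) :
    (1 / 2 : ℂ) • ((c • 1 + D) + N * (c • 1 + D) * N) = c • 1 + t • N := by
  have hNDN : N * D * N = (2 * t) • N - D := by
    rw [eq_sub_iff_add_eq]
    calc N * D * N + D = (N * D + D * N) * N := by rw [add_mul, mul_assoc D, hN, mul_one]
      _ = (2 * t) • N := by rw [hND, smul_one_mul]
  simp only [mul_add, add_mul, mul_smul_comm, smul_mul_assoc, mul_one, hN, hNDN]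
  module

end ComplexAlgebra

theorem pauliDot_conjTranspose (v : Fin 3 → ℝ) : (pauliDot v)ᴴ = pauliDot v := by
  ext i j
  fin_cases i <;> fin_cases j <;> simp [pauliDot, σ1, σ2, σ3]

theorem pauliDot_mul_add_mul_comm (a b : Fin 3 → ℝ) :
    pauliDot a * pauliDot b + pauliDot b * pauliDot a = ((2 * (a ⬝ᵥ b) : ℝ) : ℂ) • 1 := by
  ext i j
  fin_cases i <;> fin_cases j <;>
    simp [pauliDot, σ1, σ2, σ3, dotProduct, Fin.sum_univ_three] <;> ring_nf <;> simp [I_sq]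

theorem pauliDot_mul_self (v : Fin 3 → ℝ) : pauliDot v * pauliDot v = ((v ⬝ᵥ v : ℝ) : ℂ) • 1 := by
  have h := pauliDot_mul_add_mul_comm v v
  rw [← two_smul ℂ, ofReal_mul, ofReal_ofNat, mul_smul] at h
  exact smul_right_injective _ (two_ne_zero (α := ℂ)) h

theorem trace_pauliDot (v : Fin 3 → ℝ) : (pauliDot v).trace = 0 := by
  simp [pauliDot, σ1, σ2, σ3, Matrix.trace_fin_two]

theorem pauliDot_mul_self_eq_one {n : Fin 3 → ℝ} (hn : n ⬝ᵥ n = 1) :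
    pauliDot n * pauliDot n = 1 := by
  rw [pauliDot_mul_self, hn, ofReal_one, one_smul]

theorem Ux_eq {n : Fin 3 → ℝ} (hn : n ⬝ᵥ n = 1) (x : ℝ) :
    Ux n x = (Real.cos (x / 2) : ℂ) • 1 - ((Real.sin (x / 2) : ℂ) * I) • pauliDot n := by
  rw [Ux, NormedSpace.exp_smul_of_mul_self_eq_one (pauliDot_mul_self_eq_one hn), cosh_neg,
    sinh_neg, mul_comm I, cosh_mul_I, sinh_mul_I, ← ofReal_cos, ← ofReal_sin, neg_smul,
    ← sub_eq_add_neg]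

theorem Ux_conjTranspose {n : Fin 3 → ℝ} (hn : n ⬝ᵥ n = 1) (x : ℝ) :
    (Ux n x)ᴴ = (Real.cos (x / 2) : ℂ) • 1 + ((Real.sin (x / 2) : ℂ) * I) • pauliDot n := by
  rw [Ux_eq hn, conjTranspose_sub, conjTranspose_smul, conjTranspose_smul, conjTranspose_one,
    pauliDot_conjTranspose]
  simp only [star_mul', RCLike.star_def, conj_ofReal, conj_I, mul_neg, neg_smul, sub_neg_eq_add]

theorem exists_Ux_conj_eq_const_add_cos_add_sin {n : Fin 3 → ℝ} (hn : n ⬝ᵥ n = 1) (d0 : ℝ)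
    (d : Fin 3 → ℝ) :
    ∃ A B : Matrix (Fin 2) (Fin 2) ℂ, ∀ x : ℝ,
      Ux n x * ((d0 : ℂ) • 1 + pauliDot d) * (Ux n x)ᴴ
        = ((d0 : ℂ) • 1 + ((d ⬝ᵥ n : ℝ) : ℂ) • pauliDot n)
          + (Real.cos x : ℂ) • A + (Real.sin x : ℂ) • B := by
  have hND : pauliDot n * pauliDot d + pauliDot d * pauliDot n
      = (2 * ((d ⬝ᵥ n : ℝ) : ℂ)) • 1 := by
    rw [pauliDot_mul_add_mul_comm, dotProduct_comm]; push_cast; rfl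
  set N := pauliDot n
  set P := (d0 : ℂ) • 1 + pauliDot d
  refine ⟨(1 / 2 : ℂ) • (P - N * P * N), (I / 2) • (P * N - N * P), fun x => ?_⟩
  rw [Ux_conjTranspose hn, Ux_eq hn, conj_rotation_eq, mul_div_cancel₀ x two_ne_zero,
    half_smul_add_mul_mul_eq_of_anticomm (pauliDot_mul_self_eq_one hn) hND]

theorem integral_const_add_cos_mul_add_sin_mul (a b c : ℂ) :
    ∫ x in (0 : ℝ)..2 * Real.pi, (a + (Real.cos x : ℂ) * b + (Real.sin x : ℂ) * c)
      = 2 * Real.pi * a := by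
  have hcos : IntervalIntegrable (fun x : ℝ => (Real.cos x : ℂ) * b) MeasureTheory.volume
      0 (2 * Real.pi) := (by fun_prop : Continuous _).intervalIntegrable _ _
  have hsin : IntervalIntegrable (fun x : ℝ => (Real.sin x : ℂ) * c) MeasureTheory.volume
      0 (2 * Real.pi) := (by fun_prop : Continuous _).intervalIntegrable _ _
  rw [intervalIntegral.integral_add (intervalIntegrable_const.add hcos) hsin,
    intervalIntegral.integral_add intervalIntegrable_const hcos, intervalIntegral.integral_const,
    intervalIntegral.integral_mul_const, intervalIntegral.integral_mul_const,
    intervalIntegral.integral_ofReal, intervalIntegral.integral_ofReal, integral_cos, integral_sin]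
  simp

theorem groupAverage_eq {n : Fin 3 → ℝ} (hn : n ⬝ᵥ n = 1) (d0 : ℝ) (d : Fin 3 → ℝ)
    (i j : Fin 2) :
    groupAverage n d0 d i j = ((d0 : ℂ) • 1 + ((d ⬝ᵥ n : ℝ) : ℂ) • pauliDot n) i j := by
  obtain ⟨A, B, hconj⟩ := exists_Ux_conj_eq_const_add_cos_add_sin hn d0 d
  simp only [groupAverage, hconj, Matrix.add_apply, Matrix.smul_apply, smul_eq_mul,
    integral_const_add_cos_mul_add_sin_mul]
  field_simp

theorem smul_one_add_smul_pauliDot_eq_one_iff {v : Fin 3 → ℝ} (hv : v ≠ 0) (a b : ℂ) :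
    a • 1 + b • pauliDot v = 1 ↔ a = 1 ∧ b = 0 := by
  refine ⟨fun h => ?_, fun ⟨ha, hb⟩ => by simp [ha, hb]⟩
  have ha : a = 1 := by simpa [trace_pauliDot] using congrArg Matrix.trace h
  have hσ : pauliDot v ≠ 0 := fun h0 => by
    have hsq := pauliDot_mul_self v
    rw [h0, zero_mul, eq_comm, smul_eq_zero] at hsq
    simp [dotProduct_self_eq_zero, hv] at hsq
  rw [ha, one_smul, add_eq_left] at h
  exact ⟨ha, (smul_eq_zero.mp h).resolve_right hσ⟩

/-- the group average of `P₀ = d₀·I + d·σ` equals `d₀·I + (d·n)(n·σ)`;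
consequently it equals the identity iff `d₀ = 1` and `d·n = 0`. -/
theorem group_average_covariant_characterization
    (n : Fin 3 → ℝ) (hn : norm3 n = 1) (d0 : ℝ) (d : Fin 3 → ℝ) :
    (∀ i j, groupAverage n d0 d i j
        = ((d0 : ℂ) • (1 : Matrix (Fin 2) (Fin 2) ℂ)
            + ((d ⬝ᵥ n : ℝ) : ℂ) • pauliDot n) i j)
    ∧ ((∀ i j, groupAverage n d0 d i j = (1 : Matrix (Fin 2) (Fin 2) ℂ) i j)
        ↔ d0 = 1 ∧ d ⬝ᵥ n = 0) := by
  have hnn : n ⬝ᵥ n = 1 := Real.sqrt_eq_one.mp hn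
  have hn0 : n ≠ 0 := by rintro rfl; simp at hnn
  refine ⟨groupAverage_eq hnn d0 d, ?_⟩
  simp only [groupAverage_eq hnn]
  rw [Matrix.ext_iff, smul_one_add_smul_pauliDot_eq_one_iff hn0, ofReal_eq_one, ofReal_eq_zero]

end
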